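/- arXiv:2001.11431 — 3 statements merged into one kernel-verified Lean document; each statement's English description precedes it below -/
import Mathlib

section
/- Let D be a Steiner 2-(2^{m+s} - 2^m + 2^s, 2^s, 1) design with m ≥ s ≥ 1, and let C⊥ be the dual of the binary code spanned by the incidence matrix of D. Every codeword of C⊥ of weight 2^m + 2 has support equal to a hyperoval of D, and conversely the characteristic vector of every hyperoval of D lies in C⊥. Hence the number of codewords of weight 2^m + 2 in C⊥ equals the number of hyperovals of D. -/
open Finset

/-!
Let `S` meet every block evenly, and let `p ∈ S` lie on a block `b`. The blocks through `p`
partition the other points, so there are `r = (v - 1) / (k - 1) = 2 ^ m + 1` of them, and they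
partition the `2 ^ m + 1` points of `S \ {p}`. Each of them contains `p` and meets `S` evenly, so it
meets `S \ {p}` at least once, hence exactly once; in particular `|S ∩ b| = 2`.
Over `ZMod 2` a word is the indicator of its support, and it lies in `C⊥` exactly when its support
meets every block evenly.
-/

section LinearSpace

variable {X : Type*} [DecidableEq X] {B : Finset (Finset X)}

theorem card_filter_mem_and_mem_eq_one
    (hpair : ∀ p q : X, p ≠ q → ∃! b, b ∈ B ∧ p ∈ b ∧ q ∈ b) {p q : X} (hpq : p ≠ q) :
    #{b ∈ B | p ∈ b ∧ q ∈ b} = 1 := by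
  obtain ⟨u, hu, huniq⟩ := hpair p q hpq
  rw [card_eq_one]
  exact ⟨u, eq_singleton_iff_unique_mem.mpr
    ⟨mem_filter.mpr hu, fun b hb => huniq b (mem_filter.mp hb)⟩⟩

theorem sum_card_inter_erase_filter_mem
    (hpair : ∀ p q : X, p ≠ q → ∃! b, b ∈ B ∧ p ∈ b ∧ q ∈ b) (S : Finset X) (p : X) :
    ∑ b ∈ B with p ∈ b, #((S ∩ b).erase p) = #(S.erase p) := by
  have hone : ∀ q ∈ S.erase p, #{b ∈ {b ∈ B | p ∈ b} | q ∈ b} = 1 := fun q hq => by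
    rw [filter_filter]
    exact card_filter_mem_and_mem_eq_one hpair (ne_of_mem_erase hq).symm
  simpa only [erase_inter, mul_one] using sum_card_inter hone

theorem card_filter_mem_mul_sub_one [Fintype X]
    (hpair : ∀ p q : X, p ≠ q → ∃! b, b ∈ B ∧ p ∈ b ∧ q ∈ b) {k : ℕ}
    (hblock : ∀ b ∈ B, #b = k) (p : X) :
    #{b ∈ B | p ∈ b} * (k - 1) = Fintype.card X - 1 := by
  have h := sum_card_inter_erase_filter_mem hpair univ p
  rw [card_erase_of_mem (mem_univ p), card_univ] at h
  rw [← h, sum_const_nat fun b hb => ?_]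
  rw [mem_filter] at hb
  rw [univ_inter, card_erase_of_mem hb.2, hblock b hb.1]

theorem card_inter_eq_zero_or_two_of_even {r : ℕ}
    (hpair : ∀ p q : X, p ≠ q → ∃! b, b ∈ B ∧ p ∈ b ∧ q ∈ b)
    (hrep : ∀ p, #{b ∈ B | p ∈ b} = r) {S : Finset X} (hS : #S = r + 1)
    (heven : ∀ b ∈ B, Even #(S ∩ b)) {b : Finset X} (hb : b ∈ B) :
    #(S ∩ b) = 0 ∨ #(S ∩ b) = 2 := by
  rcases (S ∩ b).eq_empty_or_nonempty with h | ⟨p, hp⟩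
  · exact Or.inl (card_eq_zero.mpr h)
  have hpS : p ∈ S := (mem_inter.mp hp).1
  have hpos : ∀ b' ∈ B.filter (p ∈ ·), 1 ≤ #((S ∩ b').erase p) := fun b' hb' => by
    rw [mem_filter] at hb'
    have hp' : p ∈ S ∩ b' := mem_inter.mpr ⟨hpS, hb'.2⟩
    have := (heven b' hb'.1).two_dvd
    have := card_pos.mpr ⟨p, hp'⟩
    rw [card_erase_of_mem hp']
    omega
  have hsum : ∑ b' ∈ B with p ∈ b', 1 = ∑ b' ∈ B with p ∈ b', #((S ∩ b').erase p) := by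
    rw [sum_card_inter_erase_filter_mem hpair, card_erase_of_mem hpS, hS, sum_const, hrep,
      smul_eq_mul, mul_one, Nat.add_sub_cancel]
  have := (sum_eq_sum_iff_of_le hpos).mp hsum b (mem_filter.mpr ⟨hb, (mem_inter.mp hp).2⟩)
  rw [card_erase_of_mem hp] at this
  omega

end LinearSpace

theorem card_filter_mem_eq_two_pow_add_one {X : Type*} [Fintype X] [DecidableEq X]
    {m s : ℕ} (hs : 1 ≤ s) {B : Finset (Finset X)}
    (hv : Fintype.card X = 2 ^ (m + s) - 2 ^ m + 2 ^ s)
    (hblock : ∀ b ∈ B, #b = 2 ^ s)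
    (hpair : ∀ p q : X, p ≠ q → ∃! b, b ∈ B ∧ p ∈ b ∧ q ∈ b) (p : X) :
    #{b ∈ B | p ∈ b} = 2 ^ m + 1 := by
  have hk : 2 ≤ 2 ^ s := Nat.le_self_pow (by omega) 2
  have hv' : Fintype.card X - 1 = (2 ^ m + 1) * (2 ^ s - 1) := by
    have : 2 ^ m ≤ 2 ^ m * 2 ^ s := Nat.le_mul_of_pos_right _ (by omega)
    rw [hv, pow_add]
    zify [this, show 1 ≤ 2 ^ s by omega, show 1 ≤ 2 ^ m * 2 ^ s - 2 ^ m + 2 ^ s by omega]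
    ring
  exact Nat.eq_of_mul_eq_mul_right (by omega)
    ((card_filter_mem_mul_sub_one hpair hblock p).trans hv')

theorem sum_ite_mem_eq_card_inter {X : Type*} [DecidableEq X] (S b : Finset X) :
    ∑ p ∈ b, (if p ∈ S then (1 : ZMod 2) else 0) = #(S ∩ b) := by
  rw [sum_boole, filter_mem_eq_inter, inter_comm]

section BinaryWords

variable {X : Type*} [Fintype X] [DecidableEq X]

theorem ite_mem_filter_ne_zero (c : X → ZMod 2) :
    (fun p => if p ∈ univ.filter (c · ≠ 0) then (1 : ZMod 2) else 0) = c := by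
  funext p
  simp only [mem_filter_univ]
  generalize c p = x
  revert x
  decide

theorem filter_ite_mem_ne_zero (S : Finset X) :
    univ.filter (fun p => (if p ∈ S then (1 : ZMod 2) else 0) ≠ 0) = S := by
  ext p
  by_cases hp : p ∈ S <;> simp [hp]

theorem sum_eq_zero_iff_even_card_inter (c : X → ZMod 2) (b : Finset X) :
    ∑ p ∈ b, c p = 0 ↔ Even #(univ.filter (c · ≠ 0) ∩ b) := by
  conv_lhs => rw [← ite_mem_filter_ne_zero c]
  rw [sum_ite_mem_eq_card_inter, ZMod.natCast_eq_zero_iff_even]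

end BinaryWords

theorem dual_min_words_are_hyperovals_general {X : Type*} [Fintype X] [DecidableEq X]
    (m s : ℕ) (hs : 1 ≤ s)
    (B : Finset (Finset X))
    (hv : Fintype.card X = 2 ^ (m + s) - 2 ^ m + 2 ^ s)
    (hblock : ∀ b ∈ B, b.card = 2 ^ s)
    (hpair : ∀ p q : X, p ≠ q → ∃! b, b ∈ B ∧ p ∈ b ∧ q ∈ b) :
    (∀ c : X → ZMod 2, (∀ b ∈ B, ∑ p ∈ b, c p = 0) →
      (univ.filter (fun p => c p ≠ 0)).card = 2 ^ m + 2 →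
      ∀ b ∈ B, ((univ.filter (fun p => c p ≠ 0)) ∩ b).card = 0 ∨
        ((univ.filter (fun p => c p ≠ 0)) ∩ b).card = 2) ∧
    (∀ S : Finset X, S.card = 2 ^ m + 2 →
      (∀ b ∈ B, (S ∩ b).card = 0 ∨ (S ∩ b).card = 2) →
      ∀ b ∈ B, ∑ p ∈ b, (if p ∈ S then (1 : ZMod 2) else 0) = 0) ∧
    (univ.filter (fun c : X → ZMod 2 => (∀ b ∈ B, ∑ p ∈ b, c p = 0) ∧
        (univ.filter (fun p => c p ≠ 0)).card = 2 ^ m + 2)).card =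
      (univ.filter (fun S : Finset X => S.card = 2 ^ m + 2 ∧
        ∀ b ∈ B, (S ∩ b).card = 0 ∨ (S ∩ b).card = 2)).card := by
  have hrep := card_filter_mem_eq_two_pow_add_one hs hv hblock hpair
  have words_are_hyperovals : ∀ c : X → ZMod 2, (∀ b ∈ B, ∑ p ∈ b, c p = 0) →
      #(univ.filter (c · ≠ 0)) = 2 ^ m + 2 →
      ∀ b ∈ B, #(univ.filter (c · ≠ 0) ∩ b) = 0 ∨ #(univ.filter (c · ≠ 0) ∩ b) = 2 :=
    fun c hc hw b hb => card_inter_eq_zero_or_two_of_even hpair hrep hw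
      (fun b hb => (sum_eq_zero_iff_even_card_inter c b).mp (hc b hb)) hb
  have hyperovals_are_words : ∀ S : Finset X, #S = 2 ^ m + 2 →
      (∀ b ∈ B, #(S ∩ b) = 0 ∨ #(S ∩ b) = 2) →
      ∀ b ∈ B, ∑ p ∈ b, (if p ∈ S then (1 : ZMod 2) else 0) = 0 := fun S _ hS b hb => by
    rw [sum_ite_mem_eq_card_inter, ZMod.natCast_eq_zero_iff_even]
    rcases hS b hb with h | h <;> simp [h]
  refine ⟨words_are_hyperovals, hyperovals_are_words,
    card_bij' (fun c _ => univ.filter (c · ≠ 0)) (fun S _ p => if p ∈ S then 1 else 0) ?_ ?_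
      (fun c _ => ite_mem_filter_ne_zero c) (fun S _ => filter_ite_mem_ne_zero S)⟩
  · intro c hc
    rw [mem_filter_univ] at hc ⊢
    exact ⟨hc.2, words_are_hyperovals c hc.1 hc.2⟩
  · intro S hS
    rw [mem_filter_univ] at hS ⊢
    exact ⟨hyperovals_are_words S hS.1 hS.2, by rw [filter_ite_mem_ne_zero]; exact hS.1⟩

/-- For a Steiner 2-(2^{m+s} - 2^m + 2^s, 2^s, 1) design D with m ≥ s ≥ 1 and
the dual C⊥ of the binary code spanned by its incidence matrix: every codeword
of C⊥ of weight 2^m + 2 has support a hyperoval of D, the characteristic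
vector of every hyperoval lies in C⊥, and the number of codewords of weight
2^m + 2 in C⊥ equals the number of hyperovals of D. -/
theorem dual_min_words_are_hyperovals {X : Type*} [Fintype X] [DecidableEq X]
    (m s : ℕ) (hs : 1 ≤ s) (hms : s ≤ m)
    (B : Finset (Finset X))
    (hv : Fintype.card X = 2 ^ (m + s) - 2 ^ m + 2 ^ s)
    (hblock : ∀ b ∈ B, b.card = 2 ^ s)
    (hpair : ∀ p q : X, p ≠ q → ∃! b, b ∈ B ∧ p ∈ b ∧ q ∈ b) :
    (∀ c : X → ZMod 2, (∀ b ∈ B, ∑ p ∈ b, c p = 0) →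
      (univ.filter (fun p => c p ≠ 0)).card = 2 ^ m + 2 →
      ∀ b ∈ B, ((univ.filter (fun p => c p ≠ 0)) ∩ b).card = 0 ∨
        ((univ.filter (fun p => c p ≠ 0)) ∩ b).card = 2) ∧
    (∀ S : Finset X, S.card = 2 ^ m + 2 →
      (∀ b ∈ B, (S ∩ b).card = 0 ∨ (S ∩ b).card = 2) →
      ∀ b ∈ B, ∑ p ∈ b, (if p ∈ S then (1 : ZMod 2) else 0) = 0) ∧
    (univ.filter (fun c : X → ZMod 2 => (∀ b ∈ B, ∑ p ∈ b, c p = 0) ∧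
        (univ.filter (fun p => c p ≠ 0)).card = 2 ^ m + 2)).card =
      (univ.filter (fun S : Finset X => S.card = 2 ^ m + 2 ∧
        ∀ b ∈ B, (S ∩ b).card = 0 ∨ (S ∩ b).card = 2)).card :=
  dual_min_words_are_hyperovals_general m s hs B hv hblock hpair
end

section
/- Let D be a Steiner 2-(2^{m+s} - 2^m + 2^s, 2^s, 1) design with m ≥ s ≥ 1 and let C⊥ be the dual of the binary code of D. Then the minimum distance d⊥ of C⊥ satisfies d⊥ ≥ 2^m + 2; moreover d⊥ = 2^m + 2 if D contains a hyperoval, and d⊥ ≥ 2^m + 4 if D has no hyperovals. -/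
open Finset

/-!
Through a point `p` of a support `S` of a word of `C⊥`, the `r = (v - 1)/(k - 1) = 2^m + 1` blocks on `p` partition
`S \ {p}`, and each meets it in an odd number of points, since it meets `S` evenly. Hence
`|S| - 1` is a sum of `r` odd numbers: `|S| ≥ r + 1`, `|S|` is even because `r` is odd, and
equality forces every block on `p` to meet `S` in exactly two points. If `|S| = r + 1` this holds
at every point of `S`, so `S` is a hyperoval; without hyperovals, `|S| ≥ r + 3`.
-/

namespace Finset

variable {ι : Type*} {s : Finset ι} {f : ι → ℕ}

lemma card_le_sum_of_odd (hf : ∀ i ∈ s, Odd (f i)) : #s ≤ ∑ i ∈ s, f i := by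
  simpa using card_nsmul_le_sum s f 1 fun i hi => (hf i hi).pos

lemma odd_sum_iff_odd_card_of_odd (hf : ∀ i ∈ s, Odd (f i)) :
    Odd (∑ i ∈ s, f i) ↔ Odd #s := by
  rw [odd_sum_iff_odd_card_odd, filter_true_of_mem hf]

lemma eq_one_of_sum_eq_card_of_odd (hf : ∀ i ∈ s, Odd (f i)) (hsum : ∑ i ∈ s, f i = #s) :
    ∀ i ∈ s, f i = 1 := by
  rw [card_eq_sum_ones] at hsum
  exact fun i hi => ((sum_eq_sum_iff_of_le fun j hj => (hf j hj).pos).1 hsum.symm i hi).symm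

end Finset

section LinearSpace

variable {X : Type*} [DecidableEq X] {B : Finset (Finset X)}

def pencil (B : Finset (Finset X)) (p : X) : Finset (Finset X) := B.filter (p ∈ ·)

/-- No size condition: a nonempty such set automatically has `r + 1` points. -/
def IsHyperoval (B : Finset (Finset X)) (S : Finset X) : Prop :=
  ∀ b ∈ B, #(S ∩ b) = 0 ∨ #(S ∩ b) = 2

lemma IsHyperoval.even_card_inter {S : Finset X} (hS : IsHyperoval B S) :
    ∀ b ∈ B, Even #(b ∩ S) := by
  intro b hb
  rw [inter_comm]
  rcases hS b hb with h | h <;> simp [h]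

variable (hpair : ∀ p q : X, p ≠ q → ∃! b, b ∈ B ∧ p ∈ b ∧ q ∈ b)
include hpair

lemma card_erase_eq_sum_pencil (p : X) (T : Finset X) :
    #(T.erase p) = ∑ b ∈ pencil B p, #((b ∩ T).erase p) := by
  rw [← card_biUnion]
  · congr 1
    ext q
    simp only [pencil, mem_biUnion, mem_erase, mem_filter, mem_inter]
    constructor
    · rintro ⟨hqp, hqT⟩
      obtain ⟨b, ⟨hb, hpb, hqb⟩, -⟩ := hpair p q (Ne.symm hqp)
      exact ⟨b, ⟨hb, hpb⟩, hqp, hqb, hqT⟩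
    · rintro ⟨b, -, hqp, -, hqT⟩
      exact ⟨hqp, hqT⟩
  · intro b₁ h₁ b₂ h₂ hne
    simp only [pencil, mem_coe, mem_filter] at h₁ h₂
    refine disjoint_left.2 fun q hq₁ hq₂ => ?_
    simp only [mem_erase, mem_inter] at hq₁ hq₂
    obtain ⟨b, -, huniq⟩ := hpair p q (Ne.symm hq₁.1)
    exact hne ((huniq b₁ ⟨h₁.1, h₁.2, hq₁.2.1⟩).trans (huniq b₂ ⟨h₂.1, h₂.2, hq₂.2.1⟩).symm)

lemma card_pencil_mul_sub_one [Fintype X] {k : ℕ} (hblock : ∀ b ∈ B, #b = k) (p : X) :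
    #(pencil B p) * (k - 1) = Fintype.card X - 1 := by
  have hsplit := card_erase_eq_sum_pencil hpair p univ
  rw [card_erase_of_mem (mem_univ p), card_univ] at hsplit
  rw [hsplit, sum_congr rfl fun b hb => ?_, sum_const, smul_eq_mul]
  have hb := mem_filter.1 hb
  rw [inter_univ, card_erase_of_mem hb.2, hblock b hb.1]

lemma card_pencil_eq [Fintype X] {m s : ℕ} (hs : 1 ≤ s)
    (hv : Fintype.card X = 2 ^ (m + s) - 2 ^ m + 2 ^ s)
    (hblock : ∀ b ∈ B, #b = 2 ^ s) (p : X) :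
    #(pencil B p) = 2 ^ m + 1 := by
  have hmul := card_pencil_mul_sub_one hpair hblock p
  have hk : 2 ≤ 2 ^ s := Nat.le_self_pow (by omega) 2
  have hmv : 2 ^ m ≤ 2 ^ (m + s) := Nat.pow_le_pow_right two_pos (by omega)
  have hv' : Fintype.card X - 1 = (2 ^ m + 1) * (2 ^ s - 1) := by
    rw [hv]
    zify [hk.trans' one_le_two, hmv, show 1 ≤ 2 ^ (m + s) - 2 ^ m + 2 ^ s by omega]
    push_cast [pow_add]
    ring
  rw [hv'] at hmul
  exact Nat.eq_of_mul_eq_mul_right (by omega) hmul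

variable {S : Finset X} (hS : ∀ b ∈ B, Even #(b ∩ S)) {p : X} (hp : p ∈ S)
include hS hp

omit hpair in
lemma odd_card_inter_erase : ∀ b ∈ pencil B p, Odd #((b ∩ S).erase p) := by
  intro b hb
  have hb := mem_filter.1 hb
  have hpbS : p ∈ b ∩ S := mem_inter.2 ⟨hb.2, hp⟩
  rw [card_erase_of_mem hpbS]
  exact Nat.Even.sub_odd (card_pos.2 ⟨p, hpbS⟩) (hS b hb.1) odd_one

omit hS in
lemma card_eq_sum_pencil : #S = ∑ b ∈ pencil B p, #((b ∩ S).erase p) + 1 := by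
  rw [← card_erase_eq_sum_pencil hpair, card_erase_add_one hp]

lemma card_pencil_add_one_le : #(pencil B p) + 1 ≤ #S := by
  rw [card_eq_sum_pencil hpair hp]
  exact Nat.add_le_add_right (card_le_sum_of_odd (odd_card_inter_erase hS hp)) 1

lemma even_card_of_odd_card_pencil (hr : Odd #(pencil B p)) : Even #S := by
  rw [card_eq_sum_pencil hpair hp]
  exact ((odd_sum_iff_odd_card_of_odd (odd_card_inter_erase hS hp)).2 hr).add_one

lemma card_inter_eq_two_of_card_eq (hcard : #S = #(pencil B p) + 1) :
    ∀ b ∈ pencil B p, #(b ∩ S) = 2 := by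
  intro b hb
  rw [card_eq_sum_pencil hpair hp, add_left_inj] at hcard
  have hone := eq_one_of_sum_eq_card_of_odd (odd_card_inter_erase hS hp) hcard b hb
  rw [card_erase_of_mem (mem_inter.2 ⟨(mem_filter.1 hb).2, hp⟩)] at hone
  omega

end LinearSpace

lemma isHyperoval_of_card_eq {X : Type*} [DecidableEq X] {B : Finset (Finset X)}
    (hpair : ∀ p q : X, p ≠ q → ∃! b, b ∈ B ∧ p ∈ b ∧ q ∈ b) {r : ℕ}
    (hrep : ∀ p, #(pencil B p) = r) {S : Finset X} (hS : ∀ b ∈ B, Even #(b ∩ S))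
    (hcard : #S = r + 1) : IsHyperoval B S := by
  intro b hb
  rw [inter_comm]
  obtain hempty | ⟨p, hp⟩ := (b ∩ S).eq_empty_or_nonempty
  · simp [hempty]
  · have hp := mem_inter.1 hp
    exact Or.inr <| card_inter_eq_two_of_card_eq hpair hS hp.2 (hrep p ▸ hcard) b
      (mem_filter.2 ⟨hb, hp.1⟩)

section BinaryWords

variable {X : Type*} [Fintype X] [DecidableEq X]

lemma sum_eq_zero_iff_even_card_inter_support (c : X → ZMod 2) (b : Finset X) :
    ∑ p ∈ b, c p = 0 ↔ Even #(b ∩ univ.filter (fun p => c p ≠ 0)) := by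
  have hone : ∀ x : ZMod 2, x ≠ 0 → x = 1 := by decide
  have hfilter : b ∩ univ.filter (fun p => c p ≠ 0) = b.filter (fun p => c p ≠ 0) := by
    ext p
    simp
  rw [hfilter, ← ZMod.natCast_eq_zero_iff_even, ← sum_filter_ne_zero,
    sum_congr rfl fun p hp => hone (c p) (mem_filter.1 hp).2, sum_const, nsmul_one]

lemma filter_indicator_ne_zero (S : Finset X) :
    univ.filter (fun p => (if p ∈ S then 1 else 0 : ZMod 2) ≠ 0) = S := by
  ext p
  by_cases hp : p ∈ S <;> simp [hp]

end BinaryWords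

/-- For a Steiner 2-(2^{m+s} - 2^m + 2^s, 2^s, 1) design D with m ≥ s ≥ 1 and
the dual C⊥ of its binary code: every nonzero codeword of C⊥ has weight at
least 2^m + 2; the minimum weight 2^m + 2 is attained if D contains a
hyperoval; and if D has no hyperoval then every nonzero codeword of C⊥ has
weight at least 2^m + 4. -/
theorem dual_min_distance {X : Type*} [Fintype X] [DecidableEq X]
    (m s : ℕ) (hs : 1 ≤ s) (hms : s ≤ m)
    (B : Finset (Finset X))
    (hv : Fintype.card X = 2 ^ (m + s) - 2 ^ m + 2 ^ s)
    (hblock : ∀ b ∈ B, b.card = 2 ^ s)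
    (hpair : ∀ p q : X, p ≠ q → ∃! b, b ∈ B ∧ p ∈ b ∧ q ∈ b) :
    (∀ c : X → ZMod 2, (∀ b ∈ B, ∑ p ∈ b, c p = 0) → c ≠ 0 →
      2 ^ m + 2 ≤ (univ.filter (fun p => c p ≠ 0)).card) ∧
    ((∃ S : Finset X, S.card = 2 ^ m + 2 ∧
        ∀ b ∈ B, (S ∩ b).card = 0 ∨ (S ∩ b).card = 2) →
      ∃ c : X → ZMod 2, (∀ b ∈ B, ∑ p ∈ b, c p = 0) ∧ c ≠ 0 ∧
        (univ.filter (fun p => c p ≠ 0)).card = 2 ^ m + 2) ∧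
    ((¬ ∃ S : Finset X, S.card = 2 ^ m + 2 ∧
        ∀ b ∈ B, (S ∩ b).card = 0 ∨ (S ∩ b).card = 2) →
      ∀ c : X → ZMod 2, (∀ b ∈ B, ∑ p ∈ b, c p = 0) → c ≠ 0 →
        2 ^ m + 4 ≤ (univ.filter (fun p => c p ≠ 0)).card) := by
  have hrep : ∀ p, #(pencil B p) = 2 ^ m + 1 := card_pencil_eq hpair hs hv hblock
  have heven : Even (2 ^ m) := (Nat.even_pow' (by omega)).2 even_two
  have hcode : ∀ c : X → ZMod 2, (∀ b ∈ B, ∑ p ∈ b, c p = 0) →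
      ∀ b ∈ B, Even #(b ∩ univ.filter (fun p => c p ≠ 0)) := fun c hc b hb =>
    (sum_eq_zero_iff_even_card_inter_support c b).1 (hc b hb)
  have hsupp : ∀ c : X → ZMod 2, c ≠ 0 → ∃ p, p ∈ univ.filter (fun p => c p ≠ 0) := fun c hc0 =>
    (Function.ne_iff.1 hc0).imp fun p hp => mem_filter.2 ⟨mem_univ p, hp⟩
  refine ⟨fun c hc hc0 => ?_, fun ⟨S, hScard, hS⟩ => ?_, fun hno c hc hc0 => ?_⟩
  · obtain ⟨p, hp⟩ := hsupp c hc0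
    have hlow := card_pencil_add_one_le hpair (hcode c hc) hp
    rw [hrep] at hlow
    omega
  · have hSne : S.Nonempty := card_pos.1 (by rw [hScard]; positivity)
    refine ⟨fun p => if p ∈ S then 1 else 0, fun b hb => ?_, fun h0 => ?_, ?_⟩
    · rw [sum_eq_zero_iff_even_card_inter_support, filter_indicator_ne_zero]
      exact IsHyperoval.even_card_inter hS b hb
    · obtain ⟨p, hp⟩ := hSne
      simpa [hp] using congrFun h0 p
    · rw [filter_indicator_ne_zero, hScard]
  · obtain ⟨p, hp⟩ := hsupp c hc0
    have hlow := card_pencil_add_one_le hpair (hcode c hc) hp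
    have hpar := even_card_of_odd_card_pencil hpair (hcode c hc) hp (hrep p ▸ heven.add_one)
    have hne : #(univ.filter (fun p => c p ≠ 0)) ≠ 2 ^ m + 2 := fun hcard =>
      hno ⟨_, hcard, isHyperoval_of_card_eq hpair hrep (hcode c hc) hcard⟩
    rw [hrep] at hlow
    obtain ⟨a, ha⟩ := heven
    obtain ⟨n, hn⟩ := hpar
    omega
end

section
/- Let D be a Steiner 2-(v,k,1) design with replication number r, and let S be a nonempty set of points meeting every block in an even number of points. Then |S| ≥ r + 1. -/
/-! Fix `p ∈ S`. Each of the `r` blocks through `p` meets `S` in an even, hence second, point,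
and two blocks through `p` cannot share that second point. So `r ≤ |S| - 1`. -/

open Finset

theorem Finset.one_lt_card_of_even_card {α : Type*} {s : Finset α} {a : α}
    (hs : Even #s) (ha : a ∈ s) : 1 < #s := by
  obtain ⟨m, hm⟩ := hs
  have := card_pos.2 ⟨a, ha⟩
  omega

theorem card_filter_mem_le_card_erase {X : Type*} [DecidableEq X]
    {B : Finset (Finset X)} {S : Finset X} {p : X}
    (hunique : ∀ q, q ≠ p → ∀ b₁ ∈ B, ∀ b₂ ∈ B, p ∈ b₁ → q ∈ b₁ → p ∈ b₂ → q ∈ b₂ → b₁ = b₂)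
    (hmeet : ∀ b ∈ B, p ∈ b → 1 < #(S ∩ b)) :
    #(B.filter (fun b => p ∈ b)) ≤ #(S.erase p) := by
  refine card_le_card_of_forall_subsingleton (fun b q => q ∈ b) ?_ ?_
  · intro b hb
    obtain ⟨hbB, hpb⟩ := mem_filter.1 hb
    obtain ⟨q, hq, hqp⟩ := exists_mem_ne (hmeet b hbB hpb) p
    obtain ⟨hqS, hqb⟩ := mem_inter.1 hq
    exact ⟨q, mem_erase.2 ⟨hqp, hqS⟩, hqb⟩
  · intro q hq b₁ ⟨hb₁, hqb₁⟩ b₂ ⟨hb₂, hqb₂⟩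
    rw [mem_filter] at hb₁ hb₂
    exact hunique q (ne_of_mem_erase hq) b₁ hb₁.1 b₂ hb₂.1 hb₁.2 hqb₁ hb₂.2 hqb₂

theorem even_set_card_ge_general {X : Type*} [DecidableEq X]
    (r : ℕ)
    (B : Finset (Finset X))
    (hpair : ∀ p q : X, p ≠ q → ∃! b, b ∈ B ∧ p ∈ b ∧ q ∈ b)
    (hrep : ∀ p : X, (B.filter (fun b => p ∈ b)).card = r)
    (S : Finset X) (hne : S.Nonempty)
    (heven : ∀ b ∈ B, Even ((S ∩ b).card)) :
    r + 1 ≤ S.card := by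
  obtain ⟨p, hp⟩ := hne
  have hle := card_filter_mem_le_card_erase (S := S)
    (fun q hqp b₁ hb₁ b₂ hb₂ hp₁ hq₁ hp₂ hq₂ =>
      (hpair p q hqp.symm).unique ⟨hb₁, hp₁, hq₁⟩ ⟨hb₂, hp₂, hq₂⟩)
    (fun b hb hpb => one_lt_card_of_even_card (heven b hb) (mem_inter.2 ⟨hp, hpb⟩))
  rw [hrep, card_erase_of_mem hp] at hle
  have := card_pos.2 ⟨p, hp⟩
  omega

/-- In a Steiner 2-(v,k,1) design with replication number r, a nonempty set of
points meeting every block in an even number of points has size at least r+1. -/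
theorem even_set_card_ge {X : Type*} [Fintype X] [DecidableEq X]
    (k r : ℕ) (hk : 2 ≤ k)
    (B : Finset (Finset X))
    (hblock : ∀ b ∈ B, b.card = k)
    (hpair : ∀ p q : X, p ≠ q → ∃! b, b ∈ B ∧ p ∈ b ∧ q ∈ b)
    (hrep : ∀ p : X, (B.filter (fun b => p ∈ b)).card = r)
    (S : Finset X) (hne : S.Nonempty)
    (heven : ∀ b ∈ B, Even ((S ∩ b).card)) :
    r + 1 ≤ S.card :=
  even_set_card_ge_general r B hpair hrep S hne heven
end
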